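/- Let M ≥ 1, let p : (ZMod (2M) → ℝ) → Fin 2 → ℝ be shift-permutation equivariant, let x : ZMod (2M) → ℝ satisfy p x 0 ≠ p x 1, and let g : (ZMod M → ℝ) → ℝ be shift-invariant, i.e., g(T_M y) = g(y) for all y. Then the composed network is truly shift-invariant on x: g(LPD(T_{2M} x)) = g(LPD(x)). -/
import Mathlib


/-- Circular shift of a signal of length `N`: `(T_N x)[n] = x[n+1]`. -/
def Tshift (N : ℕ) (x : ZMod N → ℝ) : ZMod N → ℝ := fun n => x (n + 1)

/-- Polyphase component `k ∈ {0,1}` of a signal of length `2M`: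
`Poly(x)_k[n] = x[(2 n̄ + k) mod 2M]`. -/
def poly (M : ℕ) (x : ZMod (2 * M) → ℝ) (k : Fin 2) : ZMod M → ℝ :=
  fun n => x ((2 * n.val + k.val : ℕ) : ZMod (2 * M))

/-- `p` is shift-permutation equivariant: `p (T_{2M} x) (1 - k) = p x k`. -/
def ShiftPermEquivariant (M : ℕ) (p : (ZMod (2 * M) → ℝ) → Fin 2 → ℝ) : Prop :=
  ∀ (x : ZMod (2 * M) → ℝ) (k : Fin 2), p (Tshift (2 * M) x) (1 - k) = p x k

/-- The index maximizing `k ↦ p x k` (unique whenever `p x 0 ≠ p x 1`). -/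
noncomputable def kstar (M : ℕ) (p : (ZMod (2 * M) → ℝ) → Fin 2 → ℝ)
    (x : ZMod (2 * M) → ℝ) : Fin 2 :=
  if p x 1 < p x 0 then 0 else 1

/-- Learnable polyphase downsampling: `LPD(x) = Poly(x)_{k*(x)}`. -/
noncomputable def LPD (M : ℕ) (p : (ZMod (2 * M) → ℝ) → Fin 2 → ℝ)
    (x : ZMod (2 * M) → ℝ) : ZMod M → ℝ :=
  poly M x (kstar M p x)

lemma poly_shift0 (M : ℕ) (x : ZMod (2 * M) → ℝ) :
    poly M (Tshift (2 * M) x) 0 = poly M x 1 := by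
  funext n
  simp only [poly, Tshift, Fin.val_zero, Fin.val_one]
  congr 1
  push_cast
  ring

lemma poly_shift1 (M : ℕ) [NeZero M] (x : ZMod (2 * M) → ℝ) :
    poly M (Tshift (2 * M) x) 1 = Tshift M (poly M x 0) := by
  funext n
  simp only [poly, Tshift, Fin.val_zero, Fin.val_one]
  congr 1
  have h1 : ((n + 1).val : ℕ) ≡ n.val + 1 [MOD M] := by
    have : (((n + 1).val : ℕ) : ZMod M) = ((n.val + 1 : ℕ) : ZMod M) := by
      push_cast [ZMod.natCast_val, ZMod.cast_id]
      ring
    exact (ZMod.natCast_eq_natCast_iff _ _ _).mp this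
  have h2 : 2 * ((n + 1).val : ℕ) + 0 ≡ 2 * n.val + 1 + 1 [MOD 2 * M] := by
    have := h1.mul_left' (c := 2)
    simpa [mul_add] using this
  have := (ZMod.natCast_eq_natCast_iff _ _ _).mpr h2
  push_cast at this ⊢
  linear_combination -this

/-- A shift-invariant head composed with LPD is truly shift-invariant. -/
theorem lpd_composed_shift_invariant (M : ℕ) [NeZero M]
    (p : (ZMod (2 * M) → ℝ) → Fin 2 → ℝ) (hp : ShiftPermEquivariant M p)
    (x : ZMod (2 * M) → ℝ) (hx : p x 0 ≠ p x 1)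
    (g : (ZMod M → ℝ) → ℝ) (hg : ∀ y : ZMod M → ℝ, g (Tshift M y) = g y) :
    g (LPD M p (Tshift (2 * M) x)) = g (LPD M p x) := by
  have e1 : p (Tshift (2 * M) x) 1 = p x 0 := hp x 0
  have e0 : p (Tshift (2 * M) x) 0 = p x 1 := hp x 1
  unfold LPD kstar
  rw [e0, e1]
  rcases lt_or_gt_of_ne hx with h | h
  · -- p x 0 < p x 1 : kstar x = 1, kstar Tx = 0
    rw [if_pos h, if_neg (not_lt.mpr h.le), poly_shift0]
  · -- p x 1 < p x 0 : kstar x = 0, kstar Tx = 1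
    rw [if_neg (not_lt.mpr h.le), if_pos h, poly_shift1, hg]
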